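/- For subspaces A, B, C, D, E, F of a finite-dimensional vector space V, I(A;B) ≤ I(A;C) + I(B;D|C) + I(A;E|D) + I(B;F|E) + I(A;B|F), where I(X;Y) = dim X + dim Y - dim(X+Y) and I(X;Y|T) = dim(X+T) + dim(Y+T) - dim(X+Y+T) - dim T. -/

import Mathlib

/-! The intersection `Z = A ⊓ B` is a common part of `A` and `B` with `dim Z = I(A;B)`.
Split `dim Z = I(Z;C) + H(Z|C)` and pass the residual entropy down the chain `C, D, E, G`:
each link costs `H(Z|X) ≤ I(Z;Y|X) + H(Z|Y)`, and at the end `H(Z|G) ≤ I(A;B|G)`.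
Finally `I(Z;·|·)` is monotone in its first argument and `Z` lies in both `A` and `B`. -/

open Module

noncomputable def condH {F V : Type*} [Field F] [AddCommGroup V] [Module F V]
    (X Y : Submodule F V) : ℤ :=
  (finrank F ↑(X ⊔ Y) : ℤ) - finrank F ↑Y

noncomputable def mutI {F V : Type*} [Field F] [AddCommGroup V] [Module F V]
    (X Y : Submodule F V) : ℤ :=
  (finrank F ↑X : ℤ) + finrank F ↑Y - finrank F ↑(X ⊔ Y)

noncomputable def condI {F V : Type*} [Field F] [AddCommGroup V] [Module F V]
    (X Y T : Submodule F V) : ℤ :=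
  (finrank F ↑(X ⊔ T) : ℤ) + finrank F ↑(Y ⊔ T) - finrank F ↑(X ⊔ Y ⊔ T) - finrank F ↑T

section Submodularity

variable {F V : Type*} [Field F] [AddCommGroup V] [Module F V]

theorem mutI_add_condH (Z C : Submodule F V) : mutI Z C + condH Z C = finrank F ↑Z := by
  rw [mutI, condH]
  ring

variable [FiniteDimensional F V]

theorem finrank_sup_add_le_of_le_inf {U W X : Submodule F V} (hX : X ≤ U ⊓ W) :
    finrank F ↑(U ⊔ W) + finrank F ↑X ≤ finrank F ↑U + finrank F ↑W :=
  Submodule.finrank_sup_add_finrank_inf_eq U W ▸ Nat.add_le_add_left (Submodule.finrank_mono hX) _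

theorem mutI_eq_finrank_inf (A B : Submodule F V) : mutI A B = finrank F ↑(A ⊓ B) := by
  have h := Submodule.finrank_sup_add_finrank_inf_eq A B
  rw [mutI]
  omega

theorem mutI_mono_left {Z X : Submodule F V} (hZX : Z ≤ X) (C : Submodule F V) :
    mutI Z C ≤ mutI X C := by
  have h := finrank_sup_add_le_of_le_inf (U := X) (W := Z ⊔ C) (X := Z)
    (le_inf hZX le_sup_left)
  rw [← sup_assoc, sup_eq_left.mpr hZX] at h
  rw [mutI, mutI]
  omega

theorem condI_mono_left {Z X : Submodule F V} (hZX : Z ≤ X) (Y T : Submodule F V) :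
    condI Z Y T ≤ condI X Y T := by
  have h := finrank_sup_add_le_of_le_inf (U := X ⊔ T) (W := Z ⊔ Y ⊔ T) (X := Z ⊔ T)
    (le_inf (sup_le_sup_right hZX T) (sup_le_sup_right le_sup_left T))
  rw [show X ⊔ T ⊔ (Z ⊔ Y ⊔ T) = X ⊔ Y ⊔ T by
    rw [sup_sup_sup_comm, sup_idem, ← sup_assoc, sup_eq_left.mpr hZX]] at h
  rw [condI, condI]
  omega

theorem condH_le_condI_add_condH (Z X Y : Submodule F V) :
    condH Z X ≤ condI Z Y X + condH Z Y := by
  have h := finrank_sup_add_le_of_le_inf (U := Z ⊔ Y) (W := Y ⊔ X) (X := Y)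
    (le_inf le_sup_right le_sup_left)
  rw [show Z ⊔ Y ⊔ (Y ⊔ X) = Z ⊔ Y ⊔ X by rw [← sup_assoc, sup_assoc Z Y Y, sup_idem]] at h
  rw [condH, condH, condI]
  omega

theorem condH_le_condI_of_le_of_le {Z A B : Submodule F V} (hZA : Z ≤ A) (hZB : Z ≤ B)
    (G : Submodule F V) : condH Z G ≤ condI A B G := by
  have h := finrank_sup_add_le_of_le_inf (U := A ⊔ G) (W := B ⊔ G) (X := Z ⊔ G)
    (le_inf (sup_le_sup_right hZA G) (sup_le_sup_right hZB G))
  rw [sup_sup_sup_comm, sup_idem] at h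
  rw [condH, condI]
  omega

end Submodularity

theorem stmt15 {F V : Type*} [Field F] [AddCommGroup V] [Module F V] [FiniteDimensional F V]
    (A B C D E G : Submodule F V) :
    mutI A B ≤ mutI A C + condI B D C + condI A E D + condI B G E + condI A B G := by
  set Z := A ⊓ B
  have hZA : Z ≤ A := inf_le_left
  have hZB : Z ≤ B := inf_le_right
  calc mutI A B = mutI Z C + condH Z C := by rw [mutI_eq_finrank_inf, mutI_add_condH]
    _ ≤ mutI Z C + condI Z D C + condI Z E D + condI Z G E + condH Z G := by
      linarith [condH_le_condI_add_condH Z C D, condH_le_condI_add_condH Z D E,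
        condH_le_condI_add_condH Z E G]
    _ ≤ mutI A C + condI B D C + condI A E D + condI B G E + condI A B G := by
      gcongr ?_ + ?_ + ?_ + ?_ + ?_
      · exact mutI_mono_left hZA C
      · exact condI_mono_left hZB D C
      · exact condI_mono_left hZA E D
      · exact condI_mono_left hZB G E
      · exact condH_le_condI_of_le_of_le hZA hZB G
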